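/- arXiv:2301.04219 — 3 statements merged into one kernel-verified Lean document; each statement's English description precedes it below -/
import Mathlib

section
/- Let X be a finite set with |X| = n, let m be a positive integer with m ≤ n/2, and let F be a family of m-element subsets of X. Then |{T ⊆ X : |T| = 2m} \ Ext(F, 2m)| / C(n, 2m) ≤ ( |{U ⊆ X : |U| = m} \ F| / C(n, m) )²; equivalently, κ( C(X,2m) − Ext(F,2m) ) ≥ 2·κ( C(X,m) − F ), where C(X,p) denotes the family of all p-element subsets of X. -/
open Finset

lemma card_filter_superset {α : Type} [Fintype α] [DecidableEq α]
    (S : Finset α) (l : ℕ) (hS : S.card ≤ l) :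
    ((Finset.powersetCard l (Finset.univ : Finset α)).filter (fun T => S ⊆ T)).card
      = (Fintype.card α - S.card).choose (l - S.card) := by
  have hcard : ((Finset.univ : Finset α) \ S).card = Fintype.card α - S.card := by
    rw [card_sdiff_of_subset (subset_univ S), card_univ]
  rw [← hcard, ← Finset.card_powersetCard (l - S.card) (Finset.univ \ S)]
  apply Finset.card_bij' (fun T _ => T \ S) (fun U _ => U ∪ S)
  · intro T hT
    simp only [mem_filter, mem_powersetCard] at hT
    obtain ⟨⟨-, hTl⟩, hST⟩ := hT
    simp only [mem_powersetCard]
    exact ⟨sdiff_subset_sdiff (subset_univ T) le_rfl,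
      by rw [card_sdiff_of_subset hST, hTl]⟩
  · intro U hU
    simp only [mem_powersetCard] at hU
    obtain ⟨hUs, hUc⟩ := hU
    have hdisj : Disjoint U S := by
      refine disjoint_left.2 fun a haU haS => ?_
      exact (mem_sdiff.1 (hUs haU)).2 haS
    simp only [mem_filter, mem_powersetCard]
    refine ⟨⟨subset_univ _, ?_⟩, subset_union_right⟩
    rw [card_union_of_disjoint hdisj, hUc]
    omega
  · intro T hT
    simp only [mem_filter] at hT
    exact sdiff_union_of_subset hT.2
  · intro U hU
    simp only [mem_powersetCard] at hU
    apply union_sdiff_cancel_right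
    exact disjoint_left.2 fun a haU haS => (mem_sdiff.1 (hU.1 haU)).2 haS

lemma sum_inter_card_invariant {α : Type} [Fintype α] [DecidableEq α]
    (f : ℕ → ℝ) (m : ℕ) {T T' : Finset α} (h : T.card = T'.card) :
    ∑ A ∈ powersetCard m T, ∑ B ∈ powersetCard m T, f ((A ∩ B).card)
      = ∑ A ∈ powersetCard m T', ∑ B ∈ powersetCard m T', f ((A ∩ B).card) := by
  classical
  have e : {x // x ∈ T} ≃ {x // x ∈ T'} := Finset.equivOfCardEq h
  set σ : Equiv.Perm α := e.extendSubtype with hσ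
  have hmem : ∀ x ∈ T, σ x ∈ T' := fun x hx => e.extendSubtype_mem x hx
  have hmem' : ∀ y ∈ T', σ.symm y ∈ T := by
    intro y hy
    by_contra hc
    have := e.extendSubtype_not_mem (σ.symm y) hc
    rw [← hσ, Equiv.apply_symm_apply] at this
    exact this hy
  have hmapsto : ∀ A ∈ powersetCard m T, A.image σ ∈ powersetCard m T' := by
    intro A hA
    rw [mem_powersetCard] at hA ⊢
    refine ⟨fun y hy => ?_, by rw [card_image_of_injective _ σ.injective]; exact hA.2⟩
    obtain ⟨x, hx, rfl⟩ := mem_image.1 hy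
    exact hmem x (hA.1 hx)
  have hmapsto' : ∀ A ∈ powersetCard m T', A.image σ.symm ∈ powersetCard m T := by
    intro A hA
    rw [mem_powersetCard] at hA ⊢
    refine ⟨fun y hy => ?_, by rw [card_image_of_injective _ σ.symm.injective]; exact hA.2⟩
    obtain ⟨x, hx, rfl⟩ := mem_image.1 hy
    exact hmem' x (hA.1 hx)
  have hli : ∀ A : Finset α, (A.image σ).image σ.symm = A := by
    intro A; rw [image_image]; simp
  have hri : ∀ A : Finset α, (A.image σ.symm).image σ = A := by
    intro A; rw [image_image]; simp
  rw [← Finset.sum_product', ← Finset.sum_product']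
  refine Finset.sum_nbij' (fun p => (p.1.image σ, p.2.image σ))
    (fun p => (p.1.image σ.symm, p.2.image σ.symm)) ?_ ?_ ?_ ?_ ?_
  · rintro ⟨A, B⟩ hp
    rw [mem_product] at hp ⊢
    exact ⟨hmapsto _ hp.1, hmapsto _ hp.2⟩
  · rintro ⟨A, B⟩ hp
    rw [mem_product] at hp ⊢
    exact ⟨hmapsto' _ hp.1, hmapsto' _ hp.2⟩
  · rintro ⟨A, B⟩ _
    simp [hli]
  · rintro ⟨A, B⟩ _
    simp [hri]
  · rintro ⟨A, B⟩ _
    simp only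
    rw [← Finset.image_inter _ _ σ.injective, card_image_of_injective _ σ.injective]

/-- The `l`-extension of a family `F`: all `l`-subsets of the universe
containing some member of `F`. -/
def ExtFamily {α : Type} [Fintype α] [DecidableEq α]
    (F : Finset (Finset α)) (l : ℕ) : Finset (Finset α) :=
  (Finset.powersetCard l (Finset.univ : Finset α)).filter (fun T => ∃ U ∈ F, U ⊆ T)

/-- For a family `F` of `m`-subsets of an `n`-set with `2m ≤ n`,
the density of the complement of `Ext(F,2m)` among `2m`-sets is at most the square
of the density of the complement of `F` among `m`-sets; equivalently
`κ(C(X,2m) − Ext(F,2m)) ≥ 2·κ(C(X,m) − F)`. -/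
theorem ext_double_sparsity (α : Type) [Fintype α] [DecidableEq α]
    (m : ℕ) (hm : 0 < m) (h2m : 2 * m ≤ Fintype.card α)
    (F : Finset (Finset α)) (hF : ∀ U ∈ F, U.card = m) :
    (((Finset.powersetCard (2 * m) (Finset.univ : Finset α)
        \ ExtFamily F (2 * m)).card : ℝ) / ((Fintype.card α).choose (2 * m) : ℝ)) ≤
      (((Finset.powersetCard m (Finset.univ : Finset α) \ F).card : ℝ) /
        ((Fintype.card α).choose m : ℝ)) ^ 2 := by
  classical
  set n := Fintype.card α with hn
  set Pm := Finset.powersetCard m (Finset.univ : Finset α) with hPm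
  set P2 := Finset.powersetCard (2 * m) (Finset.univ : Finset α) with hP2
  set G := Pm \ F with hG
  set H := P2 \ ExtFamily F (2 * m) with hH
  set f : ℕ → ℝ := fun k => 1 / ((n - 2 * m + k).choose k : ℝ) with hf
  have hfnonneg : ∀ k, 0 ≤ f k := fun k => by positivity
  have hc2pos : (0 : ℝ) < (n.choose (2 * m) : ℝ) := by
    exact_mod_cast Nat.choose_pos h2m
  have hcmpos : (0 : ℝ) < (n.choose m : ℝ) := by
    exact_mod_cast Nat.choose_pos (le_trans (by omega) h2m)
  have hHsub : H ⊆ P2 := sdiff_subset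
  -- the weight function
  set W : Finset α → ℝ :=
    fun T => ∑ A ∈ powersetCard m T, ∑ B ∈ powersetCard m T, f ((A ∩ B).card) with hW
  -- swapping the order of summation
  have swap : ∀ S : Finset (Finset α), S ⊆ P2 →
      ∑ T ∈ S, W T = ∑ A ∈ Pm, ∑ B ∈ Pm,
        f ((A ∩ B).card) * ((S.filter (fun T => A ∪ B ⊆ T)).card : ℝ) := by
    intro S hS
    have hstep : ∀ T ∈ S, W T = ∑ A ∈ Pm, ∑ B ∈ Pm,
        (if A ∪ B ⊆ T then f ((A ∩ B).card) else 0) := by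
      intro T hT
      have hTsub : T ⊆ Finset.univ := subset_univ T
      have hpc : powersetCard m T = Pm.filter (fun A => A ⊆ T) := by
        ext A
        simp only [mem_powersetCard, mem_filter, hPm]
        constructor
        · exact fun h => ⟨⟨h.1.trans hTsub, h.2⟩, h.1⟩
        · exact fun h => ⟨h.2, h.1.2⟩
      rw [hW]
      simp only [hpc]
      rw [Finset.sum_filter]
      refine Finset.sum_congr rfl fun A hA => ?_
      rw [Finset.sum_filter]
      by_cases hAT : A ⊆ T
      · simp only [hAT, if_true]
        refine Finset.sum_congr rfl fun B hB => ?_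
        have : A ∪ B ⊆ T ↔ B ⊆ T := by
          rw [union_subset_iff]
          exact ⟨fun h => h.2, fun h => ⟨hAT, h⟩⟩
        simp [this]
      · simp only [hAT, if_false]
        rw [Finset.sum_eq_zero]
        intro B hB
        have : ¬ (A ∪ B ⊆ T) := fun h => hAT ((subset_union_left).trans h)
        simp [this]
    calc ∑ T ∈ S, W T
        = ∑ T ∈ S, ∑ A ∈ Pm, ∑ B ∈ Pm, (if A ∪ B ⊆ T then f ((A ∩ B).card) else 0) :=
          Finset.sum_congr rfl hstep
      _ = ∑ A ∈ Pm, ∑ B ∈ Pm, ∑ T ∈ S, (if A ∪ B ⊆ T then f ((A ∩ B).card) else 0) := by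
          rw [Finset.sum_comm]
          refine Finset.sum_congr rfl fun A _ => ?_
          rw [Finset.sum_comm]
      _ = ∑ A ∈ Pm, ∑ B ∈ Pm,
            f ((A ∩ B).card) * ((S.filter (fun T => A ∪ B ⊆ T)).card : ℝ) := by
          refine Finset.sum_congr rfl fun A _ => Finset.sum_congr rfl fun B _ => ?_
          rw [← Finset.sum_filter, Finset.sum_const, nsmul_eq_mul, mul_comm]
  -- counting supersets exactly
  have hcount : ∀ A ∈ Pm, ∀ B ∈ Pm,
      ((P2.filter (fun T => A ∪ B ⊆ T)).card : ℕ)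
        = (n - 2 * m + (A ∩ B).card).choose ((A ∩ B).card) := by
    intro A hA B hB
    rw [hPm, mem_powersetCard] at hA hB
    have hAB : (A ∪ B).card + (A ∩ B).card = 2 * m := by
      rw [card_union_add_card_inter, hA.2, hB.2]; omega
    have hkm : (A ∩ B).card ≤ m := by
      calc (A ∩ B).card ≤ A.card := card_le_card inter_subset_left
        _ = m := hA.2
    have hs : (A ∪ B).card ≤ 2 * m := by omega
    rw [hP2, card_filter_superset (A ∪ B) (2 * m) hs]
    congr 1 <;> omega
  have hchoosepos : ∀ k : ℕ, (0:ℝ) < ((n - 2 * m + k).choose k : ℝ) := by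
    intro k
    exact_mod_cast Nat.choose_pos (by omega)
  have hfone : ∀ A ∈ Pm, ∀ B ∈ Pm,
      f ((A ∩ B).card) * ((P2.filter (fun T => A ∪ B ⊆ T)).card : ℝ) = 1 := by
    intro A hA B hB
    rw [hcount A hA B hB, hf]
    exact one_div_mul_cancel (ne_of_gt (hchoosepos _))
  -- total sum over all 2m-sets
  have claim1 : ∑ T ∈ P2, W T = ((n.choose m : ℝ)) ^ 2 := by
    rw [swap P2 (Finset.Subset.refl _)]
    have : ∀ A ∈ Pm, ∀ B ∈ Pm,
        f ((A ∩ B).card) * ((P2.filter (fun T => A ∪ B ⊆ T)).card : ℝ) = 1 := hfone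
    calc ∑ A ∈ Pm, ∑ B ∈ Pm,
          f ((A ∩ B).card) * ((P2.filter (fun T => A ∪ B ⊆ T)).card : ℝ)
        = ∑ A ∈ Pm, ∑ B ∈ Pm, (1:ℝ) := by
          refine Finset.sum_congr rfl fun A hA => Finset.sum_congr rfl fun B hB => ?_
          exact this A hA B hB
      _ = ((Pm.card : ℝ)) ^ 2 := by
          simp [sq]
      _ = ((n.choose m : ℝ)) ^ 2 := by
          rw [hPm, Finset.card_powersetCard, card_univ]
  -- constancy of W on P2
  have claim2 : ∀ T ∈ P2, W T = ((n.choose m : ℝ)) ^ 2 / (n.choose (2 * m) : ℝ) := by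
    intro T hT
    have hTc : T.card = 2 * m := (mem_powersetCard.1 hT).2
    have hall : ∀ T' ∈ P2, W T' = W T := by
      intro T' hT'
      have hT'c : T'.card = 2 * m := (mem_powersetCard.1 hT').2
      exact sum_inter_card_invariant f m (hT'c.trans hTc.symm)
    have : ∑ T' ∈ P2, W T' = (P2.card : ℝ) * W T := by
      rw [Finset.sum_congr rfl hall, Finset.sum_const, nsmul_eq_mul]
    rw [claim1] at this
    have hP2card : (P2.card : ℝ) = (n.choose (2 * m) : ℝ) := by
      rw [hP2, Finset.card_powersetCard, card_univ]
    rw [hP2card] at this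
    field_simp
    linarith [this]
  -- the upper bound over H
  have claim3 : ∑ T ∈ H, W T ≤ ((G.card : ℝ)) ^ 2 := by
    rw [swap H hHsub]
    have hbound : ∀ A ∈ Pm, ∀ B ∈ Pm,
        f ((A ∩ B).card) * ((H.filter (fun T => A ∪ B ⊆ T)).card : ℝ)
          ≤ (if A ∈ G then (1:ℝ) else 0) * (if B ∈ G then (1:ℝ) else 0) := by
      intro A hA B hB
      by_cases hne : (H.filter (fun T => A ∪ B ⊆ T)).Nonempty
      · obtain ⟨T, hT⟩ := hne
        rw [mem_filter] at hT
        obtain ⟨hTH, hABT⟩ := hT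
        rw [hH, mem_sdiff] at hTH
        obtain ⟨hTP2, hTE⟩ := hTH
        have hAG : A ∈ G := by
          rw [hG, mem_sdiff]
          refine ⟨hA, fun hAF => hTE ?_⟩
          rw [ExtFamily, mem_filter]
          exact ⟨hTP2, A, hAF, (subset_union_left).trans hABT⟩
        have hBG : B ∈ G := by
          rw [hG, mem_sdiff]
          refine ⟨hB, fun hBF => hTE ?_⟩
          rw [ExtFamily, mem_filter]
          exact ⟨hTP2, B, hBF, (subset_union_right).trans hABT⟩
        rw [if_pos hAG, if_pos hBG, mul_one]
        calc f ((A ∩ B).card) * ((H.filter (fun T => A ∪ B ⊆ T)).card : ℝ)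
            ≤ f ((A ∩ B).card) * ((P2.filter (fun T => A ∪ B ⊆ T)).card : ℝ) := by
              apply mul_le_mul_of_nonneg_left _ (hfnonneg _)
              exact_mod_cast Finset.card_le_card (Finset.filter_subset_filter _ hHsub)
          _ = 1 := hfone A hA B hB
      · rw [Finset.not_nonempty_iff_eq_empty] at hne
        rw [hne]
        simp only [Finset.card_empty, Nat.cast_zero, mul_zero]
        positivity
    calc ∑ A ∈ Pm, ∑ B ∈ Pm,
          f ((A ∩ B).card) * ((H.filter (fun T => A ∪ B ⊆ T)).card : ℝ)
        ≤ ∑ A ∈ Pm, ∑ B ∈ Pm,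
            (if A ∈ G then (1:ℝ) else 0) * (if B ∈ G then (1:ℝ) else 0) := by
          refine Finset.sum_le_sum fun A hA => Finset.sum_le_sum fun B hB => ?_
          exact hbound A hA B hB
      _ = (∑ A ∈ Pm, if A ∈ G then (1:ℝ) else 0) * (∑ B ∈ Pm, if B ∈ G then (1:ℝ) else 0) := by
          rw [Finset.sum_mul_sum]
      _ = ((G.card : ℝ)) ^ 2 := by
          have : (∑ A ∈ Pm, if A ∈ G then (1:ℝ) else 0) = (G.card : ℝ) := by
            rw [Finset.sum_ite_mem]
            have : Pm ∩ G = G := by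
              rw [Finset.inter_eq_right]
              exact fun x hx => (mem_sdiff.1 hx).1
            rw [this, Finset.sum_const, nsmul_eq_mul, mul_one]
          rw [this, sq]
  -- put it together
  have hfinal : (H.card : ℝ) * (((n.choose m : ℝ)) ^ 2 / (n.choose (2 * m) : ℝ))
      ≤ ((G.card : ℝ)) ^ 2 := by
    have : ∑ T ∈ H, W T
        = (H.card : ℝ) * (((n.choose m : ℝ)) ^ 2 / (n.choose (2 * m) : ℝ)) := by
      rw [Finset.sum_congr rfl (fun T hT => claim2 T (hHsub hT)), Finset.sum_const,
        nsmul_eq_mul]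
    rw [← this]
    exact claim3
  rw [div_pow, div_le_div_iff₀ hc2pos (by positivity)]
  have h1 : (H.card : ℝ) * ((n.choose m : ℝ)) ^ 2
      = ((H.card : ℝ) * (((n.choose m : ℝ)) ^ 2 / (n.choose (2 * m) : ℝ)))
        * (n.choose (2 * m) : ℝ) := by
    field_simp
  rw [h1]
  exact mul_le_mul_of_nonneg_right hfinal (le_of_lt hc2pos)
end

section
/- Let X be a finite set with |X| = n, let m be a positive integer, let F be a family of m-element subsets of X, and let t be a nonnegative integer with 2^t·m ≤ n. Then |{T ⊆ X : |T| = 2^t·m} \ Ext(F, 2^t·m)| / C(n, 2^t·m) ≤ ( |{U ⊆ X : |U| = m} \ F| / C(n, m) )^{2^t}. In particular, repeatedly doubling the extension parameter t times multiplies the sparsity of the complement by at least 2^t. -/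
open Finset

/-!
Write `d(𝒜)` for the proportion of the `l`-subsets of `α` lying in a family `𝒜` of `l`-sets. The
`l`-sets containing no member of `F` form a family `𝒜 l` such that every `p`-subset of a member of
`𝒜 (2 * p)` is in `𝒜 p`, and for any such pair of families `d(𝒜 (2 * p)) ≤ d(𝒜 p) ^ 2`; iterating
gives the theorem.

For the doubling step, double count the pairs `A ⊆ T` with `A ∈ 𝒜 p` and `T ∈ 𝒜 (2 * p)`. For a
fixed `A` the complements `T \ A` form a family `𝔅` of `p`-subsets of `Aᶜ`, and it suffices that `𝔅`
is no denser in `Aᶜ` than `𝒜 p` is in `α`. Sorting the `p`-sets `C` by `j = #(C ∩ A)`, all those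
with `C \ A` in the `j`-th shadow of `𝔅` lie in `𝒜 p`; by the LYM inequality that shadow is at least
as dense as `𝔅`, and Vandermonde's identity `C(n, p) = ∑ C(p, j) C(n - p, p - j)` adds up the
pieces.
-/

open scoped FinsetFamily

namespace Finset

variable {α : Type} [DecidableEq α]

lemma card_filter_superset_powersetCard_le {R s : Finset α} (hR : R ⊆ s) (k : ℕ) :
    #{B ∈ powersetCard k s | R ⊆ B} ≤ (#s - #R).choose (k - #R) := by
  rw [← card_sdiff_of_subset hR, ← card_powersetCard]
  refine card_le_card_of_injOn (· \ R) (fun B hB ↦ ?_) (fun B hB B' hB' h ↦ ?_)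
  · rw [mem_coe, mem_filter, mem_powersetCard] at hB
    rw [mem_coe, mem_powersetCard]
    exact ⟨sdiff_subset_sdiff hB.1.1 le_rfl, by rw [card_sdiff_of_subset hB.2, hB.1.2]⟩
  · rw [mem_coe, mem_filter] at hB hB'
    rw [← sdiff_union_of_subset hB.2, ← sdiff_union_of_subset hB'.2]
    exact congrArg (· ∪ R) h

/-- The iterated local LYM inequality, on the ground set `s`. -/
theorem card_mul_choose_le_card_shadow_iterate_mul_choose {𝔅 : Finset (Finset α)}
    {s : Finset α} {p j : ℕ} (h𝔅 : 𝔅 ⊆ powersetCard p s) (hj : j ≤ p) (hp : p ≤ #s) :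
    #𝔅 * (#s).choose (p - j) ≤ #(∂^[j] 𝔅) * (#s).choose p := by
  have hcount : #𝔅 * p.choose j ≤ #(∂^[j] 𝔅) * (#s - (p - j)).choose j := by
    refine card_mul_le_card_mul (fun B R ↦ R ⊆ B) (fun B hB ↦ ?_) (fun R hR ↦ ?_)
    · obtain ⟨-, hBp⟩ := mem_powersetCard.1 (h𝔅 hB)
      rw [← Nat.choose_symm hj, ← hBp, ← card_powersetCard]
      refine card_le_card fun R hR ↦ ?_
      obtain ⟨hRB, hRp⟩ := mem_powersetCard.1 hR
      refine (mem_bipartiteAbove _).2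
        ⟨mem_shadow_iterate_iff_exists_mem_card_add.2 ⟨B, hB, hRB, by omega⟩, hRB⟩
    · obtain ⟨B, hB, hRB, hBR⟩ := mem_shadow_iterate_iff_exists_mem_card_add.1 hR
      obtain ⟨hBs, hBp⟩ := mem_powersetCard.1 (h𝔅 hB)
      have hRp : #R = p - j := by omega
      calc #(bipartiteBelow (fun B R ↦ R ⊆ B) 𝔅 R)
          ≤ #{B ∈ powersetCard p s | R ⊆ B} := card_le_card (filter_subset_filter _ h𝔅)
        _ ≤ (#s - (p - j)).choose j := by
          simpa [hRp, Nat.sub_sub_self hj] using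
            card_filter_superset_powersetCard_le (hRB.trans hBs) p
  have hchoose : (#s).choose p * p.choose j = (#s).choose (p - j) * (#s - (p - j)).choose j := by
    rw [← Nat.choose_symm hj, Nat.choose_mul (Nat.sub_le p j), Nat.sub_sub_self hj]
  refine Nat.le_of_mul_le_mul_right ?_ (Nat.choose_pos (by omega : j ≤ #s - (p - j)))
  calc #𝔅 * (#s).choose (p - j) * (#s - (p - j)).choose j
      = #𝔅 * p.choose j * (#s).choose p := by rw [mul_assoc, ← hchoose]; ring
    _ ≤ #(∂^[j] 𝔅) * (#s - (p - j)).choose j * (#s).choose p := by gcongr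
    _ = #(∂^[j] 𝔅) * (#s).choose p * (#s - (p - j)).choose j := by ring

lemma union_inter_sdiff_eq_of_subset_of_disjoint {A S R : Finset α} (hS : S ⊆ A)
    (hR : Disjoint R A) : (S ∪ R) ∩ A = S ∧ (S ∪ R) \ A = R := by
  constructor
  · rw [union_inter_distrib_right, inter_eq_left.2 hS, disjoint_iff_inter_eq_empty.1 hR,
      union_empty]
  · rw [union_sdiff_distrib, sdiff_eq_empty_iff_subset.2 hS, empty_union, hR.sdiff_eq_left]

variable [Fintype α]

lemma choose_mul_card_shadow_iterate_le {𝒜 𝔅 : Finset (Finset α)} {A : Finset α} {p : ℕ}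
    (h𝔅 : 𝔅 ⊆ powersetCard p Aᶜ) (hunion : ∀ B ∈ 𝔅, powersetCard p (A ∪ B) ⊆ 𝒜)
    (j : ℕ) :
    (#A).choose j * #(∂^[j] 𝔅) ≤ #{C ∈ 𝒜 | #(C ∩ A) = j} := by
  have hdisj : ∀ R ∈ ∂^[j] 𝔅, Disjoint R A := fun R hR ↦ by
    obtain ⟨B, hB, hRB, -⟩ := mem_shadow_iterate_iff_exists_sdiff.1 hR
    exact subset_compl_iff_disjoint_right.1 (hRB.trans (mem_powersetCard.1 (h𝔅 hB)).1)
  rw [← card_powersetCard, ← card_product]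
  refine card_le_card_of_injOn (fun SR ↦ SR.1 ∪ SR.2) ?_ ?_
  · rintro ⟨S, R⟩ hSR
    obtain ⟨⟨hSA, hSj⟩, hR⟩ : (S ⊆ A ∧ #S = j) ∧ R ∈ ∂^[j] 𝔅 := by
      simpa only [mem_coe, mem_product, mem_powersetCard] using hSR
    obtain ⟨B, hB, hRB, hBR⟩ := mem_shadow_iterate_iff_exists_mem_card_add.1 hR
    have hBp := (mem_powersetCard.1 (h𝔅 hB)).2
    have hRA := hdisj R hR
    have hcard : #(S ∪ R) = p := by
      rw [card_union_of_disjoint (disjoint_of_subset_left hSA hRA.symm)]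
      omega
    rw [mem_coe, mem_filter, (union_inter_sdiff_eq_of_subset_of_disjoint hSA hRA).1]
    exact ⟨hunion B hB (mem_powersetCard.2 ⟨union_subset_union hSA hRB, hcard⟩), hSj⟩
  · rintro ⟨S, R⟩ hSR ⟨S', R'⟩ hSR' h
    simp only [mem_coe, mem_product, mem_powersetCard] at hSR hSR'
    have h₁ := union_inter_sdiff_eq_of_subset_of_disjoint hSR.1.1 (hdisj R hSR.2)
    have h₂ := union_inter_sdiff_eq_of_subset_of_disjoint hSR'.1.1 (hdisj R' hSR'.2)
    have h : S ∪ R = S' ∪ R' := h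
    exact Prod.ext (by dsimp only; rw [← h₁.1, h, h₂.1])
      (by dsimp only; rw [← h₁.2, h, h₂.2])

theorem card_mul_choose_le_card_mul_choose_sub {𝒜 𝔅 : Finset (Finset α)} {A : Finset α}
    {p : ℕ}
    (hA : #A = p) (h𝔅 : 𝔅 ⊆ powersetCard p Aᶜ)
    (hunion : ∀ B ∈ 𝔅, powersetCard p (A ∪ B) ⊆ 𝒜) (hp : 2 * p ≤ Fintype.card α) :
    #𝔅 * (Fintype.card α).choose p ≤ #𝒜 * (Fintype.card α - p).choose p := by
  set q := Fintype.card α - p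
  have hAc : #Aᶜ = q := by rw [card_compl, hA]
  have vandermonde :
      (Fintype.card α).choose p = ∑ j ∈ range (p + 1), p.choose j * q.choose (p - j) := by
    rw [show Fintype.card α = p + q by omega, Nat.add_choose_eq,
      Nat.sum_antidiagonal_eq_sum_range_succ_mk]
  calc #𝔅 * (Fintype.card α).choose p
      = ∑ j ∈ range (p + 1), p.choose j * (#𝔅 * q.choose (p - j)) := by
        rw [vandermonde, mul_sum]
        exact sum_congr rfl fun j _ ↦ by ring
    _ ≤ ∑ j ∈ range (p + 1), p.choose j * (#(∂^[j] 𝔅) * q.choose p) := by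
        refine sum_le_sum fun j hj ↦ Nat.mul_le_mul_left _ ?_
        rw [← hAc]
        exact card_mul_choose_le_card_shadow_iterate_mul_choose h𝔅
          (Nat.lt_succ_iff.1 (mem_range.1 hj)) (by omega)
    _ ≤ ∑ j ∈ range (p + 1), #{C ∈ 𝒜 | #(C ∩ A) = j} * q.choose p := by
        refine sum_le_sum fun j _ ↦ ?_
        rw [← mul_assoc, ← hA]
        exact Nat.mul_le_mul_right _ (choose_mul_card_shadow_iterate_le h𝔅 hunion j)
    _ ≤ #𝒜 * q.choose p := by
        rw [← sum_mul, sum_card_fiberwise_eq_card_filter]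
        gcongr
        exact filter_subset _ _

theorem card_mul_choose_sq_le_sq_mul_choose {𝒜 𝒯 : Finset (Finset α)} {p : ℕ}
    (h𝒜 : (𝒜 : Set (Finset α)).Sized p) (h𝒯 : (𝒯 : Set (Finset α)).Sized (2 * p))
    (hsub : ∀ T ∈ 𝒯, powersetCard p T ⊆ 𝒜) (hp : 2 * p ≤ Fintype.card α) :
    #𝒯 * (Fintype.card α).choose p ^ 2 ≤ #𝒜 ^ 2 * (Fintype.card α).choose (2 * p) := by
  set n := Fintype.card α
  have hsubsets : ∀ T ∈ 𝒯, #(bipartiteAbove (· ⊇ ·) 𝒜 T) = (2 * p).choose p :=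
    fun T hT ↦ by
    rw [← h𝒯 hT, ← card_powersetCard]
    congr 1
    ext C
    simp only [mem_bipartiteAbove, mem_powersetCard]
    exact ⟨fun hC ↦ ⟨hC.2, h𝒜 hC.1⟩, fun hC ↦ ⟨hsub T hT (mem_powersetCard.2 hC), hC.1⟩⟩
  have hsupersets :
      ∀ A ∈ 𝒜, #(bipartiteBelow (· ⊇ ·) 𝒯 A) * n.choose p ≤ #𝒜 * (n - p).choose p :=
    fun A hA ↦ by
    set 𝔅 := {B ∈ powersetCard p Aᶜ | A ∪ B ∈ 𝒯}
    have hlink : #(bipartiteBelow (· ⊇ ·) 𝒯 A) ≤ #𝔅 := by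
      refine card_le_card_of_injOn (· \ A) (fun T hT ↦ ?_) (fun T hT T' hT' h ↦ ?_)
      · rw [mem_coe, mem_bipartiteBelow] at hT
        rw [mem_coe, mem_filter, mem_powersetCard, card_sdiff_of_subset hT.2, h𝒯 hT.1, h𝒜 hA,
          union_sdiff_of_subset hT.2]
        exact ⟨⟨subset_compl_iff_disjoint_right.2 sdiff_disjoint, by omega⟩, hT.1⟩
      · rw [mem_coe, mem_bipartiteBelow] at hT hT'
        rw [← sdiff_union_of_subset hT.2, ← sdiff_union_of_subset hT'.2]
        exact congrArg (· ∪ A) h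
    calc #(bipartiteBelow (· ⊇ ·) 𝒯 A) * n.choose p ≤ #𝔅 * n.choose p := by gcongr
      _ ≤ #𝒜 * (n - p).choose p := card_mul_choose_le_card_mul_choose_sub (h𝒜 hA)
          (filter_subset _ _) (fun B hB ↦ hsub _ (mem_filter.1 hB).2) hp
  have hdouble : #𝒯 * (2 * p).choose p * n.choose p ≤ #𝒜 * (#𝒜 * (n - p).choose p) :=
    calc #𝒯 * (2 * p).choose p * n.choose p
        = ∑ A ∈ 𝒜, #(bipartiteBelow (· ⊇ ·) 𝒯 A) * n.choose p := by
          rw [← sum_mul, ← sum_card_bipartiteAbove_eq_sum_card_bipartiteBelow,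
            sum_congr rfl hsubsets, sum_const, smul_eq_mul]
      _ ≤ ∑ A ∈ 𝒜, #𝒜 * (n - p).choose p := sum_le_sum hsupersets
      _ = #𝒜 * (#𝒜 * (n - p).choose p) := by rw [sum_const, smul_eq_mul]
  have hchoose : n.choose (2 * p) * (2 * p).choose p = n.choose p * (n - p).choose p := by
    rw [Nat.choose_mul (by omega), show 2 * p - p = p by omega]
  refine Nat.le_of_mul_le_mul_right ?_ (Nat.choose_pos (by omega : p ≤ 2 * p))
  calc #𝒯 * n.choose p ^ 2 * (2 * p).choose p
      = #𝒯 * (2 * p).choose p * n.choose p * n.choose p := by ring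
    _ ≤ #𝒜 * (#𝒜 * (n - p).choose p) * n.choose p := by gcongr
    _ = #𝒜 ^ 2 * n.choose (2 * p) * (2 * p).choose p := by
        rw [mul_assoc _ (n.choose _), hchoose]; ring

theorem card_div_choose_two_mul_le_sq {𝒜 𝒯 : Finset (Finset α)} {p : ℕ}
    (h𝒜 : (𝒜 : Set (Finset α)).Sized p) (h𝒯 : (𝒯 : Set (Finset α)).Sized (2 * p))
    (hsub : ∀ T ∈ 𝒯, powersetCard p T ⊆ 𝒜) (hp : 2 * p ≤ Fintype.card α) :
    (#𝒯 : ℝ) / (Fintype.card α).choose (2 * p) ≤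
      ((#𝒜 : ℝ) / (Fintype.card α).choose p) ^ 2 := by
  have h₁ : (0 : ℝ) < (Fintype.card α).choose (2 * p) := by exact_mod_cast Nat.choose_pos hp
  have h₂ : (0 : ℝ) < (Fintype.card α).choose p := by exact_mod_cast Nat.choose_pos (by omega)
  rw [div_pow, div_le_div_iff₀ h₁ (by positivity)]
  exact_mod_cast card_mul_choose_sq_le_sq_mul_choose h𝒜 h𝒯 hsub hp

theorem card_div_choose_pow_two_mul_le_pow {𝒜 : ℕ → Finset (Finset α)}
    (hsized : ∀ l, (𝒜 l : Set (Finset α)).Sized l)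
    (hsub : ∀ l, ∀ T ∈ 𝒜 (2 * l), powersetCard l T ⊆ 𝒜 l) {m : ℕ} :
    ∀ t, 2 ^ t * m ≤ Fintype.card α →
      (#(𝒜 (2 ^ t * m)) : ℝ) / (Fintype.card α).choose (2 ^ t * m) ≤
        ((#(𝒜 m) : ℝ) / (Fintype.card α).choose m) ^ 2 ^ t
  | 0, _ => by simp
  | t + 1, ht => by
    rw [show 2 ^ (t + 1) * m = 2 * (2 ^ t * m) by ring] at ht ⊢
    calc (#(𝒜 (2 * (2 ^ t * m))) : ℝ) / (Fintype.card α).choose (2 * (2 ^ t * m))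
        ≤ ((#(𝒜 (2 ^ t * m)) : ℝ) / (Fintype.card α).choose (2 ^ t * m)) ^ 2 :=
          card_div_choose_two_mul_le_sq (hsized _) (hsized _) (hsub _) ht
      _ ≤ (((#(𝒜 m) : ℝ) / (Fintype.card α).choose m) ^ 2 ^ t) ^ 2 := by
          gcongr
          exact card_div_choose_pow_two_mul_le_pow hsized hsub t (by omega)
      _ = ((#(𝒜 m) : ℝ) / (Fintype.card α).choose m) ^ 2 ^ (t + 1) := by
          rw [← pow_mul, pow_succ]

end Finset

section ExtFamily

variable {α : Type} [Fintype α] [DecidableEq α]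

lemma powersetCard_subset_sdiff_extFamily {F : Finset (Finset α)} {k l : ℕ} {T : Finset α}
    (hT : T ∈ powersetCard l univ \ ExtFamily F l) :
    powersetCard k T ⊆ powersetCard k univ \ ExtFamily F k := by
  intro C hC
  obtain ⟨hCT, hCk⟩ := mem_powersetCard.1 hC
  simp only [ExtFamily, mem_sdiff, mem_filter, mem_powersetCard, subset_univ, true_and,
    not_and, not_exists] at hT ⊢
  exact ⟨hCk, fun _ U hU hUC ↦ hT.2 hT.1 U hU (hUC.trans hCT)⟩

lemma powersetCard_sdiff_extFamily_subset (F : Finset (Finset α)) (m : ℕ) :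
    powersetCard m univ \ ExtFamily F m ⊆ powersetCard m univ \ F := by
  intro C hC
  simp only [ExtFamily, mem_sdiff, mem_filter, not_and, not_exists] at hC ⊢
  exact ⟨hC.1, fun hCF ↦ hC.2 hC.1 C hCF subset_rfl⟩

end ExtFamily

theorem ext_iterated_double_sparsity_general (α : Type) [Fintype α] [DecidableEq α]
    (m t : ℕ) (ht : 2 ^ t * m ≤ Fintype.card α)
    (F : Finset (Finset α)) :
    (((Finset.powersetCard (2 ^ t * m) (Finset.univ : Finset α)
        \ ExtFamily F (2 ^ t * m)).card : ℝ) /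
        ((Fintype.card α).choose (2 ^ t * m) : ℝ)) ≤
      (((Finset.powersetCard m (Finset.univ : Finset α) \ F).card : ℝ) /
        ((Fintype.card α).choose m : ℝ)) ^ (2 ^ t) := by
  calc _ ≤ ((#(powersetCard m univ \ ExtFamily F m) : ℝ) / (Fintype.card α).choose m) ^ 2 ^ t
        :=
        card_div_choose_pow_two_mul_le_pow (𝒜 := fun l ↦ powersetCard l univ \ ExtFamily F l)
          (fun l _ hT ↦ (mem_powersetCard.1 (mem_sdiff.1 hT).1).2)
          (fun _ _ hT ↦ powersetCard_subset_sdiff_extFamily hT) t ht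
    _ ≤ _ := by
        gcongr (((?_ : ℕ) : ℝ) / _) ^ _
        exact card_le_card (powersetCard_sdiff_extFamily_subset F m)

/-- For a family `F` of `m`-subsets of an `n`-set and `t ≥ 0`
with `2^t·m ≤ n`, the density of the complement of `Ext(F, 2^t·m)` among
`2^t·m`-sets is at most the `2^t`-th power of the density of the complement of
`F` among `m`-sets (iterated doubling multiplies the sparsity of the
complement by at least `2^t`). -/
theorem ext_iterated_double_sparsity (α : Type) [Fintype α] [DecidableEq α]
    (m t : ℕ) (hm : 0 < m) (ht : 2 ^ t * m ≤ Fintype.card α)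
    (F : Finset (Finset α)) (hF : ∀ U ∈ F, U.card = m) :
    (((Finset.powersetCard (2 ^ t * m) (Finset.univ : Finset α)
        \ ExtFamily F (2 ^ t * m)).card : ℝ) /
        ((Fintype.card α).choose (2 ^ t * m) : ℝ)) ≤
      (((Finset.powersetCard m (Finset.univ : Finset α) \ F).card : ℝ) /
        ((Fintype.card α).choose m : ℝ)) ^ (2 ^ t) :=
  ext_iterated_double_sparsity_general α m t ht F
end

section
/- Let X be a finite set with |X| = n, let m be a positive integer dividing n, and let F be a nonempty family of m-element subsets of X. Then there exists a partition of X into m blocks X_1, ..., X_m, each of cardinality n/m, such that the number of sets U ∈ F satisfying |U ∩ X_i| = 1 for every i ∈ [m] is at least (n/m)^m · |F| / C(n, m), and this quantity is strictly greater than |F|·e^{−m}. -/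
/-!
Encode a split of `α` into `|ι|` strips of size `|κ|` by an equivalence `e : α ≃ ι × κ`, the
`i`-th strip being `e⁻¹ ({i} × κ)`. Permutations of `α` act transitively on the `|ι|`-sets and
permute the splits, so every `|ι|`-set is a transversal of the same number of splits. As every
split has exactly `|κ| ^ |ι|` transversals, double counting shows that this number is the
fraction `|κ| ^ |ι| / C(|α|, |ι|)` of all splits, hence some split has at least the average
number `|κ| ^ |ι| · |F| / C(|α|, |ι|)` of transversals in `F`. For `|ι| = m`, `|κ| = k`, the
strict bound `e^{-m} < k^m / C(mk, m)` follows from `C(mk, m) ≤ (mk)^m / m!` and Stirling's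
`m! ≥ √(2πm) (m/e)^m > (m/e)^m`.
-/

open Finset

variable {α ι κ : Type*}

def IsTransversal [DecidableEq α] (P : ι → Finset α) (U : Finset α) : Prop := ∀ i, #(U ∩ P i) = 1

instance [DecidableEq α] [Fintype ι] (P : ι → Finset α) : DecidablePred (IsTransversal P) :=
  fun U => inferInstanceAs (Decidable (∀ i, #(U ∩ P i) = 1))

def splitBlocks [Fintype α] [DecidableEq ι] (e : α ≃ ι × κ) (i : ι) : Finset α :=
  {a | (e a).1 = i}

section SplitBlocks

variable [Fintype α] [DecidableEq ι] (e : α ≃ ι × κ)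

@[simp]
lemma mem_splitBlocks {i : ι} {a : α} : a ∈ splitBlocks e i ↔ (e a).1 = i := by
  simp [splitBlocks]

lemma splitBlocks_disjoint {i j : ι} (h : i ≠ j) :
    Disjoint (splitBlocks e i) (splitBlocks e j) :=
  disjoint_left.2 fun _ hi hj => h ((mem_splitBlocks e).1 hi ▸ (mem_splitBlocks e).1 hj)

lemma biUnion_splitBlocks [DecidableEq α] [Fintype ι] : univ.biUnion (splitBlocks e) = univ :=
  eq_univ_of_forall fun a => mem_biUnion.2 ⟨(e a).1, mem_univ _, (mem_splitBlocks e).2 rfl⟩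

lemma card_splitBlocks [Fintype κ] (i : ι) : #(splitBlocks e i) = Fintype.card κ := by
  have : splitBlocks e i = univ.map ((Function.Embedding.sectR i κ).trans e.symm.toEmbedding) := by
    ext a
    simp only [mem_splitBlocks, mem_map, mem_univ, true_and]
    constructor
    · rintro rfl
      exact ⟨(e a).2, by simp⟩
    · rintro ⟨b, rfl⟩
      simp
  rw [this, card_map, card_univ]

lemma splitBlocks_perm_trans (π : Equiv.Perm α) (i : ι) :
    (splitBlocks (π.trans e) i).map π.toEmbedding = splitBlocks e i := by
  ext a
  simp [mem_map_equiv]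

lemma isTransversal_map_iff [DecidableEq α] (π : Equiv.Perm α) (U : Finset α) :
    IsTransversal (splitBlocks e) (U.map π.toEmbedding) ↔
      IsTransversal (splitBlocks (π.trans e)) U := by
  refine forall_congr' fun i => ?_
  rw [← splitBlocks_perm_trans e π, ← map_inter, card_map]

end SplitBlocks

section Transversals

variable [DecidableEq α] [Fintype ι] (e : α ≃ ι × κ)

def splitGraph (f : ι → κ) : Finset α := univ.image fun i => e.symm (i, f i)

lemma card_splitGraph (f : ι → κ) : #(splitGraph e f) = Fintype.card ι := by
  rw [splitGraph, card_image_of_injective _ fun i j h => (Prod.mk.inj (e.symm.injective h)).1,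
    card_univ]

variable [Fintype α] [DecidableEq ι]

lemma splitGraph_inter_splitBlocks (f : ι → κ) (i : ι) :
    splitGraph e f ∩ splitBlocks e i = {e.symm (i, f i)} := by
  ext a
  simp only [splitGraph, mem_inter, mem_image, mem_univ, true_and, mem_splitBlocks, mem_singleton]
  constructor
  · rintro ⟨⟨j, rfl⟩, rfl⟩
    simp
  · rintro rfl
    exact ⟨⟨i, rfl⟩, by simp⟩

lemma exists_splitGraph_subset {U : Finset α} (hU : IsTransversal (splitBlocks e) U) :
    ∃ f : ι → κ, splitGraph e f ⊆ U := by
  choose a ha using fun i => card_eq_one.1 (hU i)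
  have mem i : a i ∈ U ∩ splitBlocks e i := ha i ▸ mem_singleton_self _
  refine ⟨fun i => (e (a i)).2, fun x hx => ?_⟩
  obtain ⟨i, -, rfl⟩ := mem_image.1 hx
  have : e.symm (i, (e (a i)).2) = a i :=
    e.symm_apply_eq.2 (Prod.ext ((mem_splitBlocks e).1 (mem_inter.1 (mem i)).2).symm rfl)
  exact this ▸ (mem_inter.1 (mem i)).1

lemma card_transversals_splitBlocks [Fintype κ] :
    #{U ∈ powersetCard (Fintype.card ι) (univ : Finset α) | IsTransversal (splitBlocks e) U} =
      Fintype.card κ ^ Fintype.card ι := by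
  rw [← Fintype.card_fun, ← card_univ (α := ι → κ)]
  symm
  refine card_bij (fun f _ => splitGraph e f) (fun f _ => ?_) (fun f _ g _ hfg => ?_) fun U hU => ?_
  · simp only [mem_filter, mem_powersetCard, subset_univ, true_and, card_splitGraph]
    intro i
    rw [splitGraph_inter_splitBlocks, card_singleton]
  · funext i
    have := singleton_injective <| (splitGraph_inter_splitBlocks e f i).symm.trans
      (hfg ▸ splitGraph_inter_splitBlocks e g i)
    simpa using congrArg (fun a => (e a).2) this
  · obtain ⟨hcard, hT⟩ := by simpa only [mem_filter, mem_powersetCard] using hU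
    obtain ⟨f, hf⟩ := exists_splitGraph_subset e hT
    exact ⟨f, mem_univ _, eq_of_subset_of_card_le hf (by rw [hcard.2, card_splitGraph])⟩

end Transversals

section DoubleCounting

variable [Fintype α] [DecidableEq α] [Fintype ι] [DecidableEq ι] [Fintype κ] [DecidableEq κ]

lemma card_equivs_isTransversal_eq {U V : Finset α} (h : #U = #V) :
    #{e : α ≃ ι × κ | IsTransversal (splitBlocks e) U} =
      #{e : α ≃ ι × κ | IsTransversal (splitBlocks e) V} := by
  obtain ⟨π, rfl⟩ := Equiv.Perm.exists_map_finset_eq U V h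
  refine card_nbij' (π.symm.trans ·) (π.trans ·) (fun e he => ?_) (fun e he => ?_)
    (fun e _ => by simp [← Equiv.trans_assoc]) (fun e _ => by simp [← Equiv.trans_assoc])
  · simpa [isTransversal_map_iff, ← Equiv.trans_assoc] using he
  · simpa [isTransversal_map_iff] using he

lemma choose_mul_card_equivs_isTransversal {U : Finset α} (hU : #U = Fintype.card ι) :
    (Fintype.card α).choose (Fintype.card ι) *
        #{e : α ≃ ι × κ | IsTransversal (splitBlocks e) U} =
      Fintype.card (α ≃ ι × κ) * Fintype.card κ ^ Fintype.card ι := by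
  have := sum_card_bipartiteAbove_eq_sum_card_bipartiteBelow (s := (univ : Finset (α ≃ ι × κ)))
    (t := powersetCard (Fintype.card ι) univ) (r := fun e V => IsTransversal (splitBlocks e) V)
  simp only [bipartiteAbove, bipartiteBelow] at this
  rw [sum_const_nat fun e _ => card_transversals_splitBlocks e,
    sum_const_nat fun V hV => card_equivs_isTransversal_eq ((mem_powersetCard.1 hV).2.trans hU.symm),
    card_powersetCard, card_univ, card_univ] at this
  exact this.symm

lemma choose_mul_sum_card_isTransversal {F : Finset (Finset α)}
    (hF : ∀ U ∈ F, #U = Fintype.card ι) :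
    (Fintype.card α).choose (Fintype.card ι) *
        ∑ e : α ≃ ι × κ, #{U ∈ F | IsTransversal (splitBlocks e) U} =
      #F * (Fintype.card (α ≃ ι × κ) * Fintype.card κ ^ Fintype.card ι) := by
  have := sum_card_bipartiteAbove_eq_sum_card_bipartiteBelow (s := (univ : Finset (α ≃ ι × κ)))
    (t := F) (r := fun e V => IsTransversal (splitBlocks e) V)
  simp only [bipartiteAbove, bipartiteBelow] at this
  rw [this, mul_sum, sum_const_nat fun U hU => choose_mul_card_equivs_isTransversal (hF U hU)]

theorem exists_equiv_le_card_isTransversal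
    (hα : Fintype.card α = Fintype.card ι * Fintype.card κ) {F : Finset (Finset α)}
    (hF : ∀ U ∈ F, #U = Fintype.card ι) :
    ∃ e : α ≃ ι × κ, (Fintype.card κ : ℝ) ^ Fintype.card ι * #F /
        (Fintype.card α).choose (Fintype.card ι) ≤ #{U ∈ F | IsTransversal (splitBlocks e) U} := by
  have hE : (univ : Finset (α ≃ ι × κ)).Nonempty :=
    univ_nonempty_iff.2 (Fintype.card_eq.1 (by rw [hα, Fintype.card_prod]))
  set C := (Fintype.card α).choose (Fintype.card ι)
  have hsum : ∑ _e : α ≃ ι × κ, (Fintype.card κ : ℝ) ^ Fintype.card ι * #F / C ≤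
      ∑ e : α ≃ ι × κ, (#{U ∈ F | IsTransversal (splitBlocks e) U} : ℝ) := by
    rw [sum_const, card_univ, nsmul_eq_mul, ← mul_div_assoc, ← Nat.cast_sum]
    refine div_le_of_le_mul₀ (by positivity) (by positivity) (le_of_eq ?_)
    have := choose_mul_sum_card_isTransversal (κ := κ) hF
    rw [mul_comm _ (C : ℝ)]
    exact_mod_cast (this.trans (by ring)).symm
  obtain ⟨e, -, he⟩ := exists_le_of_sum_le hE hsum
  exact ⟨e, he⟩

end DoubleCounting

section Bounds

open Nat Real

lemma exp_neg_lt_factorial_div_pow {m : ℕ} (hm : 0 < m) : exp (-m) < m ! / m ^ m := by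
  have hsqrt : 1 < √(2 * π * m) := by
    rw [lt_sqrt zero_le_one, one_pow]
    nlinarith [pi_gt_three, (Nat.one_le_cast (α := ℝ)).2 hm]
  have hpow : (m / exp 1 : ℝ) ^ m = exp (-m) * m ^ m := by
    rw [div_pow, ← exp_nat_mul, mul_one, exp_neg]; ring
  rw [lt_div_iff₀ (by positivity), ← hpow]
  calc (m / exp 1 : ℝ) ^ m < √(2 * π * m) * (m / exp 1) ^ m :=
        lt_mul_of_one_lt_left (by positivity) hsqrt
    _ ≤ m ! := Stirling.le_factorial_stirling m

lemma exp_neg_lt_pow_div_choose {m k : ℕ} (hm : 0 < m) (hk : 0 < k) :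
    exp (-m) < (k : ℝ) ^ m / (m * k).choose m := by
  have hchoose : (0 : ℝ) < (m * k).choose m := by
    exact_mod_cast Nat.choose_pos (Nat.le_mul_of_pos_right m hk)
  calc exp (-m) < m ! / m ^ m := exp_neg_lt_factorial_div_pow hm
    _ = (k : ℝ) ^ m / (((m * k : ℕ) : ℝ) ^ m / m !) := by
        have : (m : ℝ) ≠ 0 := by positivity
        have : (k : ℝ) ≠ 0 := by positivity
        push_cast; field_simp; ring
    _ ≤ (k : ℝ) ^ m / (m * k).choose m :=
        div_le_div_of_nonneg_left (by positivity) hchoose (Nat.choose_le_pow_div m (m * k))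

end Bounds

/-- If `m ∣ n = |X|` and `F` is a nonempty family of `m`-subsets
of `X`, then there is a partition of `X` into `m` blocks of size `n/m` such that
the number of `U ∈ F` that are transversals of the partition (`|U ∩ X_i| = 1` for
every block) is at least `(n/m)^m·|F|/C(n,m) > |F|·e^{-m}`. -/
theorem split_lemma (α : Type) [Fintype α] [DecidableEq α]
    (m : ℕ) (hm : 0 < m) (hdvd : m ∣ Fintype.card α)
    (F : Finset (Finset α)) (hne : F.Nonempty) (hF : ∀ U ∈ F, U.card = m) :
    ∃ P : Fin m → Finset α,
      (∀ i j, i ≠ j → Disjoint (P i) (P j)) ∧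
      (∀ i, (P i).card = Fintype.card α / m) ∧
      (Finset.univ.biUnion P = (Finset.univ : Finset α)) ∧
      ((Fintype.card α : ℝ) / (m : ℝ)) ^ m * (F.card : ℝ) /
          ((Fintype.card α).choose m : ℝ) ≤
        ((F.filter (fun U => ∀ i, (U ∩ P i).card = 1)).card : ℝ) ∧
      (F.card : ℝ) * Real.exp (-(m : ℝ)) <
        ((Fintype.card α : ℝ) / (m : ℝ)) ^ m * (F.card : ℝ) /
          ((Fintype.card α).choose m : ℝ) := by
  obtain ⟨U, hU⟩ := hne
  set k := Fintype.card α / m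
  have hn : Fintype.card α = m * k := (Nat.mul_div_cancel' hdvd).symm
  have hk : 0 < k := Nat.pos_of_ne_zero fun h => by
    have := card_le_univ U
    rw [hF U hU, hn, h] at this
    omega
  have hnk : (Fintype.card α : ℝ) / m = k := by
    rw [Nat.cast_div hdvd (by positivity)]
  obtain ⟨e, he⟩ := exists_equiv_le_card_isTransversal (ι := Fin m) (κ := Fin k)
    (by simpa using hn) (by simpa using hF)
  simp only [Fintype.card_fin] at he
  refine ⟨splitBlocks e, fun i j => splitBlocks_disjoint e,
    fun i => (card_splitBlocks e i).trans (Fintype.card_fin k), biUnion_splitBlocks e, ?_, ?_⟩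
  · rw [hnk]
    -- the statement decides `∀ i : Fin m` by `Nat.decidableForallFin`, not via `Fintype`
    convert he using 4
    exact Iff.rfl
  · rw [hnk, mul_div_right_comm, mul_comm (F.card : ℝ), hn]
    exact mul_lt_mul_of_pos_right (exp_neg_lt_pow_div_choose hm hk)
      (by exact_mod_cast card_pos.2 ⟨U, hU⟩)
end
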